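/- Let 1 ≤ k ≤ d-1 and let S be a finite collection of caps of radius ρ^d/(1000d) on S^{d-1} with centers e(τ). Suppose that for every k-dimensional subspace H ⊆ ℝ^d, fewer than half the caps in S are contained in N_ρ(H). Then there exist caps τ_1, …, τ_{k+1} ∈ S whose centers satisfy |e(τ_1) ∧ ⋯ ∧ e(τ_{k+1})| ≥ (999/1000)·ρ^k. -/

import Mathlib

/-
Choose the centers greedily. If `e_1, …, e_m` (`m ≤ k`) are chosen, their span lies in some
`k`-dimensional subspace `H`; by hypothesis some cap `τ ∈ S` is not contained in `N_ρ(H)`, so its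
center is at distance at least `ρ - ρ^d/(1000d) ≥ ρ(1 - 1/(1000d))` from `H`, and we take
`e_{m+1} = e(τ)`. The volume `|e_1 ∧ ⋯ ∧ e_{k+1}|` is the product of the norms of the
Gram–Schmidt vectors, the `i`-th of which is at least the distance from `e_i` to the span of
the earlier ones. Since `‖e_1‖ = 1`, the volume is at least `ρ^k (1 - 1/(1000d))^k`, and
Bernoulli's inequality with `k ≤ d` gives `(1 - 1/(1000d))^k ≥ 999/1000`.
-/

open Metric Set
open scoped RealInnerProductSpace

/-- `|u_1 ∧ ⋯ ∧ u_m|`: the volume of the parallelepiped spanned by `u_1,…,u_m`,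
i.e. the square root of the Gram determinant. -/
noncomputable def gramVol {d m : ℕ} (u : Fin m → EuclideanSpace ℝ (Fin d)) : ℝ :=
  Real.sqrt (Matrix.det (Matrix.of fun i j => (⟪u i, u j⟫ : ℝ)))

/-- The spherical cap of radius `r` centered at `e`. -/
def sphCap {d : ℕ} (e : EuclideanSpace ℝ (Fin d)) (r : ℝ) : Set (EuclideanSpace ℝ (Fin d)) :=
  {u | ‖u‖ = 1 ∧ ‖u - e‖ ≤ r}

open Matrix Submodule Module InnerProductSpace

section GramSchmidt

variable {E ι : Type*} [NormedAddCommGroup E] [InnerProductSpace ℝ E]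

theorem Matrix.gram_sum_smul {n : Type*} [Fintype ι] (A : Matrix n ι ℝ) (v : ι → E) :
    gram ℝ (fun a => ∑ i, A a i • v i) = A * gram ℝ v * Aᵀ := by
  ext a b
  simp only [gram_apply, sum_inner, inner_sum, real_inner_smul_left, real_inner_smul_right,
    mul_apply, transpose_apply, Finset.sum_mul]
  exact Finset.sum_congr rfl fun i _ => Finset.sum_congr rfl fun j _ => by
    rw [real_inner_comm]; ring

variable [LinearOrder ι] [LocallyFiniteOrderBot ι] [WellFoundedLT ι]

theorem gram_gramSchmidt (f : ι → E) :
    gram ℝ (gramSchmidt ℝ f) = diagonal fun i => ‖gramSchmidt ℝ f i‖ ^ 2 := by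
  ext i j
  rcases eq_or_ne i j with rfl | hij
  · simp
  · simp [gramSchmidt_orthogonal ℝ f hij, hij]

noncomputable def gramSchmidtCoeff (f : ι → E) : Matrix ι ι ℝ :=
  of fun n i => if i < n then ⟪gramSchmidt ℝ f i, f n⟫ / ‖gramSchmidt ℝ f i‖ ^ 2
    else if i = n then 1 else 0

theorem gramSchmidtCoeff_isLowerTriangular (f : ι → E) :
    (gramSchmidtCoeff f).IsLowerTriangular := by
  intro n i (hni : n < i)
  simp [gramSchmidtCoeff, hni.not_gt, hni.ne']

theorem det_gramSchmidtCoeff [Fintype ι] (f : ι → E) : (gramSchmidtCoeff f).det = 1 := by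
  rw [det_of_isLowerTriangular _ (gramSchmidtCoeff_isLowerTriangular f)]
  exact Finset.prod_eq_one fun i _ => by simp [gramSchmidtCoeff]

theorem sum_gramSchmidtCoeff_smul [Fintype ι] (f : ι → E) (n : ι) :
    ∑ i, gramSchmidtCoeff f n i • gramSchmidt ℝ f i = f n := by
  conv_rhs => rw [gramSchmidt_def'' ℝ f n]
  simp only [gramSchmidtCoeff, of_apply, ite_smul, zero_smul, one_smul]
  rw [Finset.sum_ite, Finset.filter_gt_eq_Iio, Finset.sum_ite_eq', if_pos (by simp), add_comm]
  rfl

theorem det_gram_eq_prod_norm_gramSchmidt_sq [Fintype ι] (f : ι → E) :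
    (gram ℝ f).det = ∏ i, ‖gramSchmidt ℝ f i‖ ^ 2 := by
  conv_lhs => rw [← funext (sum_gramSchmidtCoeff_smul f)]
  rw [gram_sum_smul, gram_gramSchmidt, det_mul, det_mul, det_transpose, det_gramSchmidtCoeff,
    det_diagonal, one_mul, mul_one]

theorem infDist_span_Iio_le_norm_gramSchmidt (f : ι → E) (n : ι) :
    infDist (f n) (span ℝ (f '' Iio n)) ≤ ‖gramSchmidt ℝ f n‖ := by
  have hmem : f n - gramSchmidt ℝ f n ∈ span ℝ (f '' Iio n) := by
    rw [← span_gramSchmidt_Iio, gramSchmidt_def ℝ f n, sub_sub_cancel]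
    refine Submodule.sum_mem _ fun i hi => span_mono ?_ (starProjection_apply_mem _ _)
    exact singleton_subset_iff.2 (mem_image_of_mem _ (Finset.mem_Iio.1 hi))
  calc infDist (f n) (span ℝ (f '' Iio n)) ≤ dist (f n) (f n - gramSchmidt ℝ f n) :=
        infDist_le_dist_of_mem hmem
    _ = ‖gramSchmidt ℝ f n‖ := by rw [dist_eq_norm, sub_sub_cancel]

end GramSchmidt

theorem gramVol_eq_prod_norm_gramSchmidt {d m : ℕ} (u : Fin m → EuclideanSpace ℝ (Fin d)) :
    gramVol u = ∏ i, ‖gramSchmidt ℝ u i‖ := by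
  rw [gramVol, ← gram, det_gram_eq_prod_norm_gramSchmidt_sq, Finset.prod_pow,
    Real.sqrt_sq (by positivity)]

theorem pow_le_gramVol {d k : ℕ} {u : Fin (k + 1) → EuclideanSpace ℝ (Fin d)} {δ : ℝ}
    (hδ : 0 ≤ δ) (hu₀ : ‖u 0‖ = 1)
    (hu : ∀ i : Fin k, δ ≤ infDist (u i.succ) (span ℝ (u '' Iio i.succ))) :
    δ ^ k ≤ gramVol u := by
  rw [gramVol_eq_prod_norm_gramSchmidt, Fin.prod_univ_succ, ← bot_eq_zero, gramSchmidt_bot,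
    bot_eq_zero, hu₀, one_mul]
  calc δ ^ k = ∏ _i : Fin k, δ := by simp
    _ ≤ ∏ i : Fin k, ‖gramSchmidt ℝ u i.succ‖ := Finset.prod_le_prod (fun _ _ => hδ)
        fun i _ => (hu i).trans (infDist_span_Iio_le_norm_gramSchmidt u i.succ)

theorem Submodule.exists_le_finrank_eq {K V : Type*} [DivisionRing K] [AddCommGroup V] [Module K V]
    [FiniteDimensional K V] (V₀ : Submodule K V) {k : ℕ} (h₀ : finrank K V₀ ≤ k)
    (hk : k ≤ finrank K V) : ∃ H : Submodule K V, V₀ ≤ H ∧ finrank K H = k := by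
  induction k, h₀ using Nat.le_induction with
  | base => exact ⟨V₀, le_rfl, rfl⟩
  | succ k _ ih =>
    obtain ⟨H, hV₀H, hHk⟩ := ih (by omega)
    obtain ⟨x, hx⟩ := H.exists_of_finrank_lt (by omega)
    have hxH : x ∉ H := by simpa using hx 1 one_ne_zero
    exact ⟨H ⊔ K ∙ x, hV₀H.trans le_sup_left, by rw [finrank_sup_span_singleton hxH, hHk]⟩

theorem exists_fin_le_infDist_span_Iio {E : Type*} [NormedAddCommGroup E] [NormedSpace ℝ E]
    {S : Set E} {δ : ℝ} (m : ℕ)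
    (h : ∀ H : Submodule ℝ E, finrank ℝ H < m → ∃ e ∈ S, δ ≤ infDist e H) :
    ∃ τ : Fin m → E, (∀ i, τ i ∈ S) ∧ ∀ i, δ ≤ infDist (τ i) (span ℝ (τ '' Iio i)) := by
  induction m with
  | zero => exact ⟨Fin.elim0, fun i => i.elim0, fun i => i.elim0⟩
  | succ m ih =>
    obtain ⟨τ, hτS, hτ⟩ := ih fun H hH => h H (by omega)
    obtain ⟨e, heS, he⟩ := h (span ℝ (range τ)) ((finrank_range_le_card τ).trans_lt (by simp))
    refine ⟨Fin.snoc τ e, Fin.lastCases (by simpa) (by simpa), Fin.lastCases ?_ fun j => ?_⟩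
    · have hsub : (Fin.snoc τ e : Fin (m + 1) → E) '' Iio (Fin.last m) ⊆ range τ := by
        rintro _ ⟨l, hl, rfl⟩
        obtain ⟨j, rfl⟩ := Fin.exists_castSucc_eq.2 (ne_of_lt hl)
        simp
      rw [Fin.snoc_last]
      exact he.trans (infDist_le_infDist_of_subset (span_mono hsub) ⟨0, zero_mem _⟩)
    · rw [← Fin.image_castSucc_Iio, image_image]
      simpa using hτ j

theorem exists_center_sub_lt_infDist {d : ℕ} {S : Finset (EuclideanSpace ℝ (Fin d))}
    {H : Set (EuclideanSpace ℝ (Fin d))} {ρ r : ℝ}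
    (h : 2 * ({e ∈ (S : Set (EuclideanSpace ℝ (Fin d))) |
      sphCap e r ⊆ {x | infDist x H ≤ ρ}}.ncard : ℝ) < S.card) :
    ∃ e ∈ S, ρ - r < infDist e H := by
  obtain ⟨e, heS, x, hx, hxH⟩ : ∃ e ∈ S, ∃ x ∈ sphCap e r, ρ < infDist x H := by
    by_contra! hall
    rw [sep_eq_self_iff_mem_true (p := fun e => sphCap e r ⊆ {x | infDist x H ≤ ρ}) |>.2 hall,
      ncard_coe_finset] at h
    linarith
  refine ⟨e, heS, ?_⟩
  have hxe : dist x e ≤ r := by rw [dist_eq_norm]; exact hx.2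
  linarith [infDist_le_infDist_add_dist (x := x) (y := e) (s := H)]

theorem one_div_mul_natCast_le_one {a : ℝ} (ha : 1 ≤ a) (d : ℕ) : 1 / (a * d) ≤ 1 := by
  rcases Nat.eq_zero_or_pos d with rfl | hd
  · simp
  · have : (1 : ℝ) ≤ d := by exact_mod_cast hd
    exact div_le_one_of_le₀ (by nlinarith) (by positivity)

theorem mul_one_sub_le_sub_pow_div {ρ a : ℝ} (h₀ : 0 ≤ ρ) (h₁ : ρ ≤ 1) (ha : 0 ≤ a) (d : ℕ) :
    ρ * (1 - 1 / (a * d)) ≤ ρ - ρ ^ d / (a * d) := by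
  rcases Nat.eq_zero_or_pos d with rfl | hd
  · simp
  · have : ρ ^ d ≤ ρ := pow_le_of_le_one h₀ h₁ hd.ne'
    have : ρ ^ d / (a * d) ≤ ρ / (a * d) := by gcongr
    linarith [mul_one_div ρ (a * d)]

theorem le_one_sub_one_div_thousand_mul_pow {k d : ℕ} (hkd : k ≤ d) :
    (999 / 1000 : ℝ) ≤ (1 - 1 / (1000 * d)) ^ k := by
  have hkc : (k : ℝ) * (1 / (1000 * d)) ≤ 1 / 1000 := by
    rcases Nat.eq_zero_or_pos d with rfl | hd
    · simp
    · have : (k : ℝ) ≤ d := by exact_mod_cast hkd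
      rw [mul_one_div, div_le_div_iff₀ (by positivity) (by norm_num)]
      linarith
  have hc := one_div_mul_natCast_le_one (a := 1000) (by norm_num) d
  calc (999 / 1000 : ℝ) ≤ 1 + k * -(1 / (1000 * d)) := by linarith
    _ ≤ (1 + -(1 / (1000 * d))) ^ k := one_add_mul_le_pow (by linarith) k
    _ = (1 - 1 / (1000 * d)) ^ k := by rw [← sub_eq_add_neg]

theorem stmt_6_general (d k : ℕ) (hkd : k ≤ d - 1) (ρ : ℝ) (hρ : ρ ∈ Ioo (0 : ℝ) 1)
    (S : Finset (EuclideanSpace ℝ (Fin d))) (hS : ∀ e ∈ S, ‖e‖ = 1)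
    (hnarrow : ∀ H : Submodule ℝ (EuclideanSpace ℝ (Fin d)), Module.finrank ℝ H = k →
      2 * ({e ∈ (S : Set (EuclideanSpace ℝ (Fin d))) |
        sphCap e (ρ ^ d / (1000 * d)) ⊆ {x | Metric.infDist x H ≤ ρ}}.ncard : ℝ) < S.card) :
    ∃ τ : Fin (k + 1) → EuclideanSpace ℝ (Fin d), (∀ j, τ j ∈ S) ∧
      (999 / 1000 : ℝ) * ρ ^ k ≤ gramVol τ := by
  obtain ⟨hρ₀, hρ₁⟩ := hρ
  set δ := ρ * (1 - 1 / (1000 * d))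
  have hδ : 0 ≤ δ :=
    mul_nonneg hρ₀.le (sub_nonneg.2 (one_div_mul_natCast_le_one (by norm_num) d))
  have hfar (H : Submodule ℝ (EuclideanSpace ℝ (Fin d))) (hH : finrank ℝ H < k + 1) :
      ∃ e ∈ S, δ ≤ infDist e H := by
    obtain ⟨H', hHH', hH'k⟩ :=
      H.exists_le_finrank_eq (k := k) (by omega) (by rw [finrank_euclideanSpace_fin]; omega)
    obtain ⟨e, heS, he⟩ := exists_center_sub_lt_infDist (hnarrow H' hH'k)
    refine ⟨e, heS, ?_⟩
    calc δ ≤ ρ - ρ ^ d / (1000 * d) := mul_one_sub_le_sub_pow_div hρ₀.le hρ₁.le (by norm_num) d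
      _ ≤ infDist e H' := he.le
      _ ≤ infDist e H := infDist_le_infDist_of_subset hHH' ⟨0, zero_mem _⟩
  obtain ⟨τ, hτS, hτ⟩ := exists_fin_le_infDist_span_Iio (k + 1) hfar
  refine ⟨τ, hτS, ?_⟩
  calc (999 / 1000 : ℝ) * ρ ^ k ≤ (1 - 1 / (1000 * d)) ^ k * ρ ^ k := by
        gcongr; exact le_one_sub_one_div_thousand_mul_pow (by omega)
    _ = δ ^ k := by rw [mul_pow, mul_comm]
    _ ≤ gramVol τ := pow_le_gramVol hδ (hS _ (hτS 0)) fun i => hτ i.succ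

/-- If no `k`-dimensional subspace `H` has half the caps of `S` inside `N_ρ(H)`, then
there are `k+1` caps in `S` whose centers satisfy
`|e(τ_1) ∧ ⋯ ∧ e(τ_{k+1})| ≥ (999/1000)·ρ^k`. -/
theorem stmt_6 (d k : ℕ) (hk : 1 ≤ k) (hkd : k ≤ d - 1) (ρ : ℝ) (hρ : ρ ∈ Ioo (0 : ℝ) 1)
    (S : Finset (EuclideanSpace ℝ (Fin d))) (hS : ∀ e ∈ S, ‖e‖ = 1)
    (hnarrow : ∀ H : Submodule ℝ (EuclideanSpace ℝ (Fin d)), Module.finrank ℝ H = k →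
      2 * ({e ∈ (S : Set (EuclideanSpace ℝ (Fin d))) |
        sphCap e (ρ ^ d / (1000 * d)) ⊆ {x | Metric.infDist x H ≤ ρ}}.ncard : ℝ) < S.card) :
    ∃ τ : Fin (k + 1) → EuclideanSpace ℝ (Fin d), (∀ j, τ j ∈ S) ∧
      (999 / 1000 : ℝ) * ρ ^ k ≤ gramVol τ :=
  stmt_6_general d k hkd ρ hρ S hS hnarrow
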